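/- Suppose max_t Σ_{j=1}^∞ j‖B_{j,t}‖ < ∞ and max_t Σ_{j=0}^∞ ‖B_{j,t}‖ < ∞. Then for each t, Σ_{j=0}^∞ ‖B̃^r_{j,t}‖ ≤ M·Σ_{j=1}^∞ j‖B_{j,t}‖ < ∞ for some constant M (uniformly in r and t), where B̃^r_{j,t} = Σ_{k=j+1}^∞ (B_{k+r,t} ⊗ B_{k,t}). In particular Σ_j j‖B_{j+r,t}‖·‖B_{j,t}‖ < ∞ since ‖A⊗B‖ = ‖A‖·‖B‖. -/

import Mathlib

/-!
Since `‖A ⊗ₖ B‖ = ‖A‖ * ‖B‖` and every `‖B_{n,t}‖` is at most `K0 := sup_t Σ_n ‖B_{n,t}‖`,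
the `j`-th tail has norm at most `K0 * Σ_{n > j} ‖B_{n,t}‖`. Summing over `j` counts each
`‖B_{n,t}‖` exactly `n` times, so the sum of the tails is `K0 * Σ_n n ‖B_{n,t}‖`.
-/

open scoped BigOperators Kronecker

attribute [local instance] Matrix.frobeniusNormedAddCommGroup

theorem Matrix.frobenius_norm_kronecker {α : Type*} [NormedRing α] [NormMulClass α]
    {l m n p : Type*} [Fintype l] [Fintype m] [Fintype n] [Fintype p]
    (A : Matrix l m α) (B : Matrix n p α) : ‖A ⊗ₖ B‖ = ‖A‖ * ‖B‖ := by
  rw [Matrix.frobenius_norm_def, Matrix.frobenius_norm_def, Matrix.frobenius_norm_def,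
    ← Real.mul_rpow (by positivity) (by positivity), Finset.sum_mul_sum]
  congr 1
  simp_rw [Fintype.sum_prod_type, Matrix.kroneckerMap_apply, norm_mul,
    Real.mul_rpow (norm_nonneg _) (norm_nonneg _), Finset.mul_sum, Finset.sum_mul]
  exact Finset.sum_congr rfl fun i _ => Finset.sum_congr rfl fun i' _ => Finset.sum_comm ..

def Nat.prodEquivSigmaFin : ℕ × ℕ ≃ Σ n : ℕ, Fin n where
  toFun p := ⟨p.1 + 1 + p.2, ⟨p.1, by omega⟩⟩
  invFun x := (x.2, x.1 - 1 - x.2)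
  left_inv p := by simp
  right_inv := by
    rintro ⟨n, i, hi⟩
    have h : i + 1 + (n - 1 - i) = n := by omega
    exact Sigma.ext h ((Fin.heq_ext_iff h).mpr rfl)

theorem hasSum_tsum_tail_of_summable_nat_mul {c : ℕ → ℝ} (hc : 0 ≤ c)
    (h : Summable fun n : ℕ => (n : ℝ) * c n) :
    HasSum (fun j : ℕ => ∑' k : ℕ, c (j + 1 + k)) (∑' n : ℕ, (n : ℝ) * c n) := by
  have fiber_sum (n : ℕ) : ∑' _ : Fin n, c n = n * c n := by simp [tsum_fintype]
  have hsigma : HasSum (fun x : Σ n : ℕ, Fin n => c x.1) (∑' n : ℕ, (n : ℝ) * c n) := by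
    have hs : Summable fun x : Σ n : ℕ, Fin n => c x.1 :=
      (summable_sigma_of_nonneg fun x => hc x.1).mpr
        ⟨fun _ => .of_finite, by simpa only [fiber_sum] using h⟩
    simpa only [hs.tsum_sigma' fun _ => .of_finite, fiber_sum] using hs.hasSum
  have hprod : HasSum (fun p : ℕ × ℕ => c (p.1 + 1 + p.2)) (∑' n : ℕ, (n : ℝ) * c n) :=
    Nat.prodEquivSigmaFin.hasSum_iff.mpr hsigma
  exact hprod.prod_fiberwise fun j => (hprod.summable.prod_factor j).hasSum

section KroneckerTail

variable {m n : Type*} [Fintype m] [Fintype n] {A : ℕ → Matrix m n ℝ} {K : ℝ}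

theorem norm_tsum_kronecker_tail_le (hA : Summable fun k => ‖A k‖) (hK : ∀ k, ‖A k‖ ≤ K)
    (r j : ℕ) :
    ‖∑' k : ℕ, A (j + 1 + k + r) ⊗ₖ A (j + 1 + k)‖ ≤ K * ∑' k : ℕ, ‖A (j + 1 + k)‖ := by
  have htail : Summable fun k => ‖A (j + 1 + k)‖ := hA.comp_injective (add_right_injective _)
  refine tsum_of_norm_bounded (htail.hasSum.mul_left K) fun k => ?_
  rw [Matrix.frobenius_norm_kronecker]
  exact mul_le_mul_of_nonneg_right (hK _) (norm_nonneg _)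

theorem summable_norm_tsum_kronecker_tail_and_tsum_le (hA : Summable fun k => ‖A k‖)
    (hA' : Summable fun k : ℕ => (k : ℝ) * ‖A k‖) (hK : ∀ k, ‖A k‖ ≤ K) (r : ℕ) :
    (Summable fun j : ℕ => ‖∑' k : ℕ, A (j + 1 + k + r) ⊗ₖ A (j + 1 + k)‖) ∧
      ∑' j : ℕ, ‖∑' k : ℕ, A (j + 1 + k + r) ⊗ₖ A (j + 1 + k)‖ ≤
        K * ∑' k : ℕ, (k : ℝ) * ‖A k‖ := by
  have htails :=
    (hasSum_tsum_tail_of_summable_nat_mul (fun k => norm_nonneg (A k)) hA').mul_left K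
  have hS := htails.summable.of_nonneg_of_le (fun _ => norm_nonneg _)
    (norm_tsum_kronecker_tail_le hA hK r)
  exact ⟨hS, hasSum_le (norm_tsum_kronecker_tail_le hA hK r) hS.hasSum htails⟩

theorem summable_nat_mul_norm_shift_mul_norm (hA' : Summable fun k : ℕ => (k : ℝ) * ‖A k‖)
    (hK : ∀ k, ‖A k‖ ≤ K) (r : ℕ) :
    Summable fun j : ℕ => (j : ℝ) * (‖A (j + r)‖ * ‖A j‖) := by
  refine (hA'.mul_left K).of_nonneg_of_le (fun j => by positivity) fun j => ?_
  rw [mul_left_comm]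
  exact mul_le_mul_of_nonneg_right (hK _) (by positivity)

end KroneckerTail

theorem kronecker_tail_bound_general (d : ℕ) (B : ℕ → ℕ → Matrix (Fin d) (Fin d) ℝ) (K0 : ℝ)
    (hsum1 : ∀ t : ℕ, Summable fun j : ℕ => (j : ℝ) * ‖B j t‖)
    (hsum0 : ∀ t : ℕ, Summable fun j : ℕ => ‖B j t‖)
    (hK0 : ∀ t : ℕ, ∑' j : ℕ, ‖B j t‖ ≤ K0) :
    ∃ M : ℝ, ∀ r t : ℕ,
      (Summable fun j : ℕ => ‖∑' k : ℕ, (B (j + 1 + k + r) t) ⊗ₖ (B (j + 1 + k) t)‖) ∧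
      (∑' j : ℕ, ‖∑' k : ℕ, (B (j + 1 + k + r) t) ⊗ₖ (B (j + 1 + k) t)‖ ≤
        M * ∑' j : ℕ, (j : ℝ) * ‖B j t‖) ∧
      Summable fun j : ℕ => (j : ℝ) * (‖B (j + r) t‖ * ‖B j t‖) := by
  refine ⟨K0, fun r t => ?_⟩
  have hK (n : ℕ) : ‖B n t‖ ≤ K0 :=
    ((hsum0 t).le_tsum n fun _ _ => norm_nonneg _).trans (hK0 t)
  obtain ⟨hS, hle⟩ := summable_norm_tsum_kronecker_tail_and_tsum_le (hsum0 t) (hsum1 t) hK r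
  exact ⟨hS, hle, summable_nat_mul_norm_shift_mul_norm (hsum1 t) hK r⟩

/-- Uniform bound on the tails of the Kronecker coefficient series: under
`max_t Σ_j j‖B_{j,t}‖ < ∞` and `max_t Σ_j ‖B_{j,t}‖ < ∞`, there is a constant `M` (uniform in
`r` and `t`) with `Σ_j ‖B̃^r_{j,t}‖ ≤ M · Σ_j j‖B_{j,t}‖`, where
`B̃^r_{j,t} = Σ_{k>j} B_{k+r,t} ⊗ B_{k,t}`; in particular `Σ_j j‖B_{j+r,t}‖·‖B_{j,t}‖ < ∞`. -/
theorem kronecker_tail_bound (d : ℕ) (B : ℕ → ℕ → Matrix (Fin d) (Fin d) ℝ) (K0 K1 : ℝ)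
    (hsum1 : ∀ t : ℕ, Summable fun j : ℕ => (j : ℝ) * ‖B j t‖)
    (hK1 : ∀ t : ℕ, ∑' j : ℕ, (j : ℝ) * ‖B j t‖ ≤ K1)
    (hsum0 : ∀ t : ℕ, Summable fun j : ℕ => ‖B j t‖)
    (hK0 : ∀ t : ℕ, ∑' j : ℕ, ‖B j t‖ ≤ K0) :
    ∃ M : ℝ, ∀ r t : ℕ,
      (Summable fun j : ℕ => ‖∑' k : ℕ, (B (j + 1 + k + r) t) ⊗ₖ (B (j + 1 + k) t)‖) ∧
      (∑' j : ℕ, ‖∑' k : ℕ, (B (j + 1 + k + r) t) ⊗ₖ (B (j + 1 + k) t)‖ ≤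
        M * ∑' j : ℕ, (j : ℝ) * ‖B j t‖) ∧
      Summable fun j : ℕ => (j : ℝ) * (‖B (j + r) t‖ * ‖B j t‖) :=
  kronecker_tail_bound_general d B K0 hsum1 hsum0 hK0
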